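/- arXiv:2509.01207 — 2 statements merged into one kernel-verified Lean document; each statement's English description precedes it below -/
import Mathlib

section
/- Let Φ : [t₀, t₂) → Mₙ(ℂ) be a solution of Φ'(t) = A(t)Φ(t), where A is continuous. Then for all t ∈ [t₀, t₂), det Φ(t) = det Φ(t₀) · exp(∫_{t₀}^{t} tr A(τ) dτ). In particular, if det Φ(t₀) ≠ 0 then det Φ(t) ≠ 0 for all t in the interval. -/
/-!
The determinant is multilinear in the rows, so `(det Φ)'` is the sum over `i` of `det Φ` with
row `i` replaced by row `i` of `Φ' = A Φ`, namely `∑ₖ A i k • Φ k`; by alternation only `k = i`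
survives, giving `(det Φ)' = tr A · det Φ`. This scalar linear equation is solved by noting that
`det Φ(t) · exp (-∫_{t₀}^{t} tr A)` has zero derivative.
-/

open Matrix Set

noncomputable def Matrix.detContinuousMultilinearMap (ι 𝕜 : Type*) [Fintype ι] [DecidableEq ι]
    [NontriviallyNormedField 𝕜] : ContinuousMultilinearMap 𝕜 (fun _ : ι => ι → 𝕜) 𝕜 :=
  ⟨(detRowAlternating (n := ι) (R := 𝕜)).toMultilinearMap, continuous_id.matrix_det⟩

theorem hasDerivAt_matrix_det {𝕜 𝕜' ι : Type*} [NontriviallyNormedField 𝕜]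
    [NontriviallyNormedField 𝕜'] [NormedAlgebra 𝕜 𝕜'] [Fintype ι] [DecidableEq ι]
    {Φ : 𝕜 → Matrix ι ι 𝕜'} {Φ' : Matrix ι ι 𝕜'} {t : 𝕜}
    (h : ∀ i j, HasDerivAt (fun s => Φ s i j) (Φ' i j) t) :
    HasDerivAt (fun s => (Φ s).det) (∑ i, ((Φ t).updateRow i (Φ' i)).det) t := by
  have hrows : HasDerivAt (fun s i => Φ s i : 𝕜 → ι → ι → 𝕜') (fun i => Φ' i) t :=
    hasDerivAt_pi.2 fun i => hasDerivAt_pi.2 (h i)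
  refine ((((detContinuousMultilinearMap ι 𝕜').hasFDerivAt fun i => Φ t i).restrictScalars 𝕜
    ).comp_hasDerivAt t hrows).congr_deriv ?_
  rw [ContinuousLinearMap.coe_restrictScalars', ContinuousMultilinearMap.linearDeriv_apply]
  rfl

theorem Matrix.sum_det_updateRow_mul {R ι : Type*} [CommRing R] [Fintype ι] [DecidableEq ι]
    (A M : Matrix ι ι R) : ∑ i, (M.updateRow i ((A * M) i)).det = A.trace * M.det := by
  have hrow : ∀ i, (A * M) i = ∑ k, A i k • M k := fun i => by
    ext j
    simp [mul_apply, Finset.sum_apply]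
  simp only [hrow, det_updateRow_sum, trace, diag, Finset.sum_mul, smul_eq_mul]

theorem intervalIntegral.hasDerivWithinAt_integral_Icc {E : Type*} [NormedAddCommGroup E]
    [NormedSpace ℝ E] [CompleteSpace E] {f : ℝ → E} {a b x : ℝ} (hf : ContinuousOn f (Icc a b))
    (hx : x ∈ Icc a b) :
    HasDerivWithinAt (fun u => ∫ τ in a..u, f τ) (f x) (Icc a b) x := by
  -- provides the `FTCFilter` instance for `𝓝[Icc a b] x`
  have : Fact (x ∈ Icc a b) := ⟨hx⟩
  have hint : IntervalIntegrable f MeasureTheory.volume a x :=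
    (hf.mono (uIcc_subset_Icc (left_mem_Icc.2 (hx.1.trans hx.2)) hx)).intervalIntegrable
  exact integral_hasDerivWithinAt_right hint
    (hf.stronglyMeasurableAtFilter_nhdsWithin measurableSet_Icc x) (hf x hx)

theorem eq_of_hasDerivWithinAt_zero_Icc {E : Type*} [NormedAddCommGroup E] [NormedSpace ℝ E]
    {g : ℝ → E} {a b : ℝ} (hab : a ≤ b)
    (hg : ∀ x ∈ Icc a b, HasDerivWithinAt g 0 (Icc a b) x) : g b = g a :=
  constant_of_has_deriv_right_zero (fun x hx => (hg x hx).continuousWithinAt)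
    (fun x hx => (hg x (Ico_subset_Icc_self hx)).mono_of_mem_nhdsWithin (Icc_mem_nhdsGE_of_mem hx))
    b (right_mem_Icc.2 hab)

theorem eq_mul_exp_integral_of_hasDerivWithinAt {f a : ℝ → ℂ} {t₀ t : ℝ} (ht : t₀ ≤ t)
    (ha : ContinuousOn a (Icc t₀ t))
    (hf : ∀ x ∈ Icc t₀ t, HasDerivWithinAt f (a x * f x) (Icc t₀ t) x) :
    f t = f t₀ * Complex.exp (∫ τ in t₀..t, a τ) := by
  set F : ℝ → ℂ := fun u => ∫ τ in t₀..u, a τ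
  have hconst : f t * Complex.exp (-F t) = f t₀ * Complex.exp (-F t₀) := by
    refine eq_of_hasDerivWithinAt_zero_Icc (g := fun u => f u * Complex.exp (-F u)) ht
      fun x hx => ?_
    have hF := intervalIntegral.hasDerivWithinAt_integral_Icc ha hx
    exact ((hf x hx).fun_mul hF.fun_neg.cexp).congr_deriv (by ring)
  have hF₀ : F t₀ = 0 := intervalIntegral.integral_same
  rw [hF₀, neg_zero, Complex.exp_zero, mul_one] at hconst
  rw [← hconst, mul_assoc, ← Complex.exp_add, neg_add_cancel, Complex.exp_zero, mul_one]

/-- Liouville's formula for `Φ' = A(t) Φ` on `[t₀, t₂)`. -/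
theorem liouville_formula (n : ℕ) (t₀ t₂ : ℝ)
    (A Φ : ℝ → Matrix (Fin n) (Fin n) ℂ)
    (hA : ContinuousOn A (Set.Ico t₀ t₂))
    (hΦ : ∀ t ∈ Set.Ico t₀ t₂, ∀ i j,
      HasDerivAt (fun s => Φ s i j) ((A t * Φ t) i j) t) :
    ∀ t ∈ Set.Ico t₀ t₂,
      (Φ t).det = (Φ t₀).det * Complex.exp (∫ τ in t₀..t, (A τ).trace) ∧
        ((Φ t₀).det ≠ 0 → (Φ t).det ≠ 0) := by
  intro t ht
  have hsub : Icc t₀ t ⊆ Ico t₀ t₂ := Icc_subset_Ico_right ht.2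
  have htrace : ContinuousOn (fun τ => (A τ).trace) (Icc t₀ t) :=
    continuous_id.matrix_trace.comp_continuousOn (hA.mono hsub)
  have hdet : ∀ x ∈ Icc t₀ t, HasDerivWithinAt (fun s => (Φ s).det)
      ((A x).trace * (Φ x).det) (Icc t₀ t) x := fun x hx =>
    (sum_det_updateRow_mul (A x) (Φ x) ▸ hasDerivAt_matrix_det (hΦ x (hsub hx))).hasDerivWithinAt
  have hformula := eq_mul_exp_integral_of_hasDerivWithinAt ht.1 htrace hdet
  exact ⟨hformula, fun h0 => hformula ▸ mul_ne_zero h0 (Complex.exp_ne_zero _)⟩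
end

section
/- Let A, S : [t₀,∞) → Mₙ(ℂ) be continuous with S(t) Hermitian negative semidefinite, and let Z̃ solve the linear Lyapunov equation Z̃' + A*(t)Z̃ + Z̃A(t) + S(t) = 0 with Z̃(t₀) = Z₀ Hermitian positive semidefinite. Then Z̃(t) is Hermitian and positive semidefinite for all t ≥ t₀. -/
/-!
Fix `T ≥ t₀` and a vector `x`, and solve the linear equation `v' = A v` backwards from
`v T = x`. Along this curve `d/dt (v* Z v) = v* (-S) v ≥ 0`, because the terms `A* Z + Z A`
of the Lyapunov equation are cancelled exactly by the derivative of `v`. Hence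
`x* Z(T) x ≥ v(t₀)* Z₀ v(t₀) ≥ 0`, and over `ℂ` a matrix with nonnegative quadratic form is
automatically Hermitian, so it is positive semidefinite.
-/

open Set Matrix
open scoped ComplexOrder

section IntegralCurve

variable {E : Type*} [NormedAddCommGroup E] [NormedSpace ℝ E] {v : ℝ → E → E}

theorem IsIntegralCurveOn.piecewise_Icc {γ₁ γ₂ : ℝ → E} {a b c : ℝ}
    (h₁ : IsIntegralCurveOn γ₁ v (Icc a b)) (h₂ : IsIntegralCurveOn γ₂ v (Icc b c))
    (hb : γ₁ b = γ₂ b) :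
    IsIntegralCurveOn (fun t ↦ if t ≤ b then γ₁ t else γ₂ t) v (Icc a c) := by
  set γ := fun t ↦ if t ≤ b then γ₁ t else γ₂ t
  have hγ₁ : EqOn γ γ₁ (Icc a b) := fun t ht ↦ if_pos ht.2
  have hγ₂ : EqOn γ γ₂ (Icc b c) := fun t ht ↦ by
    rcases ht.1.eq_or_lt with rfl | h
    · exact (if_pos le_rfl).trans hb
    · exact if_neg h.not_ge
  intro t ht
  have left : HasDerivWithinAt γ (v t (γ t)) (Icc a b) t := by
    by_cases htb : t ∈ Icc a b
    · rw [hγ₁ htb]; exact (h₁ t htb).congr hγ₁ (hγ₁ htb)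
    · exact HasFDerivWithinAt.of_notMem_closure (by rwa [closure_Icc])
  have right : HasDerivWithinAt γ (v t (γ t)) (Icc b c) t := by
    by_cases htb : t ∈ Icc b c
    · rw [hγ₂ htb]; exact (h₂ t htb).congr hγ₂ (hγ₂ htb)
    · exact HasFDerivWithinAt.of_notMem_closure (by rwa [closure_Icc])
  exact (left.union right).mono Icc_subset_Icc_union_Icc

variable [CompleteSpace E]

theorem exists_isIntegralCurveOn_clm_of_mul_le {B : ℝ → E →L[ℝ] E} {a b K : ℝ}
    (hB : ContinuousOn B (Icc a b)) (hK : ∀ t ∈ Icc a b, ‖B t‖ ≤ K) (hab : K * (b - a) ≤ 1 / 2)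
    {t₀ : ℝ} (ht₀ : t₀ ∈ Icc a b) (x : E) :
    ∃ γ, γ t₀ = x ∧ IsIntegralCurveOn γ (fun t ↦ B t) (Icc a b) := by
  have hK₀ : 0 ≤ K := (norm_nonneg _).trans (hK t₀ ht₀)
  -- On the ball of radius `‖x‖` about `x` the field is bounded by `2 K ‖x‖`, and
  -- `K (b - a) ≤ 1/2` is exactly what keeps the Picard iterates inside that ball.
  have hball : ∀ y ∈ Metric.closedBall x ‖x‖, ‖y‖ ≤ 2 * ‖x‖ := fun y hy ↦ by
    have := norm_le_norm_add_norm_sub' y x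
    rw [mem_closedBall_iff_norm] at hy
    linarith
  have hPL : IsPicardLindelof (fun t ↦ B t) (⟨t₀, ht₀⟩ : Icc a b) x ‖x‖₊ 0
      ⟨2 * K * ‖x‖, by positivity⟩ K.toNNReal := by
    refine ⟨fun t ht ↦ ?_, fun y _ ↦ hB.clm_apply continuousOn_const, fun t ht y hy ↦ ?_, ?_⟩
    · refine ((B t).lipschitz.weaken ?_).lipschitzOnWith
      rw [← NNReal.coe_le_coe, Real.coe_toNNReal _ hK₀]
      exact hK t ht
    · calc ‖B t y‖ ≤ K * ‖y‖ := (B t).le_of_opNorm_le (hK t ht) y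
        _ ≤ K * (2 * ‖x‖) := by gcongr; exact hball y hy
        _ = 2 * K * ‖x‖ := by ring
    · have : max (b - t₀) (t₀ - a) ≤ b - a := max_le (by linarith [ht₀.1]) (by linarith [ht₀.2])
      simp only [coe_nnnorm, NNReal.coe_zero, sub_zero]
      calc 2 * K * ‖x‖ * max (b - t₀) (t₀ - a) ≤ 2 * K * ‖x‖ * (b - a) := by gcongr
        _ = 2 * (K * (b - a)) * ‖x‖ := by ring
        _ ≤ 2 * (1 / 2) * ‖x‖ := by gcongr
        _ = ‖x‖ := by ring
  exact hPL.exists_eq_forall_mem_Icc_hasDerivWithinAt₀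

theorem exists_isIntegralCurveOn_clm_of_le_mul {B : ℝ → E →L[ℝ] E} {K δ : ℝ}
    (hδ : K * δ ≤ 1 / 2) (k : ℕ) {a b : ℝ} (hB : ContinuousOn B (Icc a b))
    (hK : ∀ t ∈ Icc a b, ‖B t‖ ≤ K) (hab : b - a ≤ (k + 1) * δ)
    {t₀ : ℝ} (ht₀ : t₀ ∈ Icc a b) (x : E) :
    ∃ γ, γ t₀ = x ∧ IsIntegralCurveOn γ (fun t ↦ B t) (Icc a b) := by
  have hK₀ : 0 ≤ K := (norm_nonneg _).trans (hK t₀ ht₀)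
  have hδ₀ : 0 ≤ δ :=
    nonneg_of_mul_nonneg_right (by linarith [ht₀.1.trans ht₀.2]) k.cast_add_one_pos
  induction k generalizing a t₀ x with
  | zero =>
    refine exists_isIntegralCurveOn_clm_of_mul_le hB hK ?_ ht₀ x
    calc K * (b - a) ≤ K * δ := by gcongr; simpa using hab
      _ ≤ 1 / 2 := hδ
  | succ k ih =>
    set m := max a (b - (k + 1) * δ)
    have hm : m ≤ b := max_le (ht₀.1.trans ht₀.2) (by nlinarith)
    have ham : Icc a m ⊆ Icc a b := Icc_subset_Icc_right hm
    have hmb : Icc m b ⊆ Icc a b := Icc_subset_Icc_left (le_max_left _ _)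
    have hshort : K * (m - a) ≤ 1 / 2 := by
      calc K * (m - a) ≤ K * δ := by
            gcongr
            push_cast at hab
            exact sub_le_iff_le_add.2 (max_le (by linarith) (by linarith))
        _ ≤ 1 / 2 := hδ
    have hlong : b - m ≤ (k + 1) * δ := by
      linarith [le_max_right a (b - (k + 1) * δ)]
    rcases le_or_gt t₀ m with h | h
    · obtain ⟨γ₁, hγ₁, h₁⟩ := exists_isIntegralCurveOn_clm_of_mul_le (hB.mono ham)
        (fun t ht ↦ hK t (ham ht)) hshort ⟨ht₀.1, h⟩ x
      obtain ⟨γ₂, hγ₂, h₂⟩ := ih (hB.mono hmb) (fun t ht ↦ hK t (hmb ht)) hlong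
        ⟨le_rfl, hm⟩ (γ₁ m)
      exact ⟨_, by simpa [h] using hγ₁, h₁.piecewise_Icc h₂ hγ₂.symm⟩
    · obtain ⟨γ₂, hγ₂, h₂⟩ := ih (hB.mono hmb) (fun t ht ↦ hK t (hmb ht)) hlong
        ⟨h.le, ht₀.2⟩ x
      obtain ⟨γ₁, hγ₁, h₁⟩ := exists_isIntegralCurveOn_clm_of_mul_le (hB.mono ham)
        (fun t ht ↦ hK t (ham ht)) hshort ⟨le_max_left _ _, le_rfl⟩ (γ₂ m)
      exact ⟨_, by simpa [h.not_ge] using hγ₂, h₁.piecewise_Icc h₂ hγ₁⟩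

theorem exists_isIntegralCurveOn_clm {B : ℝ → E →L[ℝ] E} {a b : ℝ}
    (hB : ContinuousOn B (Icc a b)) {t₀ : ℝ} (ht₀ : t₀ ∈ Icc a b) (x : E) :
    ∃ γ, γ t₀ = x ∧ IsIntegralCurveOn γ (fun t ↦ B t) (Icc a b) := by
  obtain ⟨K, hK⟩ := isCompact_Icc.exists_bound_of_continuousOn hB
  have hK₀ : 0 ≤ K := (norm_nonneg _).trans (hK t₀ ht₀)
  set δ := 1 / (2 * (K + 1))
  have hδ : K * δ ≤ 1 / 2 := by
    rw [mul_one_div, div_le_div_iff₀ (by positivity) two_pos]; linarith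
  have hk : b - a ≤ (⌈(b - a) / δ⌉₊ + 1) * δ := by
    rw [← div_le_iff₀ (by positivity)]; linarith [Nat.le_ceil ((b - a) / δ)]
  exact exists_isIntegralCurveOn_clm_of_le_mul hδ _ hB hK hk ht₀ x

end IntegralCurve

theorem HasDerivWithinAt.star_dotProduct_mulVec {n 𝕜 : Type*} [Fintype n] [RCLike 𝕜]
    {Z : ℝ → Matrix n n 𝕜} {Z' : Matrix n n 𝕜}
    {v : ℝ → n → 𝕜} {v' : n → 𝕜} {s : Set ℝ} {t : ℝ}
    (hZ : ∀ i j, HasDerivWithinAt (fun s ↦ Z s i j) (Z' i j) s t)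
    (hv : HasDerivWithinAt v v' s t) :
    HasDerivWithinAt (fun s ↦ star (v s) ⬝ᵥ (Z s *ᵥ v s))
      (star v' ⬝ᵥ (Z t *ᵥ v t) + star (v t) ⬝ᵥ (Z' *ᵥ v t + Z t *ᵥ v')) s t := by
  have hvi := hasDerivWithinAt_pi.1 hv
  have h : HasDerivWithinAt (fun s ↦ ∑ i, star (v s i) * ∑ j, Z s i j * v s j)
      (∑ i, (star (v' i) * ∑ j, Z t i j * v t j
        + star (v t i) * ∑ j, (Z' i j * v t j + Z t i j * v' j))) s t :=
    HasDerivWithinAt.fun_sum fun i _ ↦ (hvi i).star.fun_mul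
      (HasDerivWithinAt.fun_sum fun j _ ↦ (hZ i j).fun_mul (hvi j))
  refine h.congr_deriv ?_
  simp only [dotProduct, mulVec, Pi.add_apply, Pi.star_apply, Finset.sum_add_distrib, mul_add]

theorem lyapunov_quadratic_identity {n R : Type*} [Fintype n] [CommRing R] [StarRing R]
    (A Z S : Matrix n n R) (x : n → R) :
    star (A *ᵥ x) ⬝ᵥ (Z *ᵥ x) + star x ⬝ᵥ ((-(Aᴴ * Z + Z * A + S)) *ᵥ x + Z *ᵥ (A *ᵥ x))
      = star x ⬝ᵥ (-S *ᵥ x) := by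
  rw [star_mulVec, dotProduct_mulVec, vecMul_vecMul, mulVec_mulVec, ← dotProduct_mulVec,
    ← add_mulVec, ← dotProduct_add, ← add_mulVec]
  congr 2
  abel

theorem Complex.monotoneOn_of_hasDerivWithinAt_nonneg {D : Set ℝ} (hD : Convex ℝ D)
    {f f' : ℝ → ℂ} (hf : ContinuousOn f D)
    (hf' : ∀ x ∈ interior D, HasDerivWithinAt f (f' x) (interior D) x)
    (hf'₀ : ∀ x ∈ interior D, 0 ≤ f' x) : MonotoneOn f D := by
  have hL : ∀ L : ℂ →L[ℝ] ℝ, ∀ x ∈ interior D,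
      HasDerivWithinAt (fun x ↦ L (f x)) (L (f' x)) (interior D) x := fun L x hx ↦
    L.hasFDerivAt.comp_hasDerivWithinAt x (hf' x hx)
  have hre : MonotoneOn (fun x ↦ (f x).re) D :=
    _root_.monotoneOn_of_hasDerivWithinAt_nonneg hD (continuous_re.comp_continuousOn hf)
      (hL reCLM) fun x hx ↦ (le_def.1 (hf'₀ x hx)).1
  have him_mono : MonotoneOn (fun x ↦ (f x).im) D :=
    _root_.monotoneOn_of_hasDerivWithinAt_nonneg hD (continuous_im.comp_continuousOn hf)
      (hL imCLM) fun x hx ↦ (le_def.1 (hf'₀ x hx)).2.le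
  have him_anti : AntitoneOn (fun x ↦ (f x).im) D :=
    antitoneOn_of_hasDerivWithinAt_nonpos hD (continuous_im.comp_continuousOn hf)
      (hL imCLM) fun x hx ↦ (le_def.1 (hf'₀ x hx)).2.ge
  exact fun x hx y hy hxy ↦ le_def.2
    ⟨hre hx hy hxy, (him_mono hx hy hxy).antisymm (him_anti hx hy hxy)⟩

theorem Matrix.posSemidef_iff_forall_star_dotProduct_mulVec_nonneg {n : Type*} [Fintype n]
    {M : Matrix n n ℂ} : M.PosSemidef ↔ ∀ x, 0 ≤ star x ⬝ᵥ (M *ᵥ x) := by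
  classical
  refine ⟨PosSemidef.dotProduct_mulVec_nonneg, fun h ↦ ?_⟩
  rw [← Matrix.isPositive_toEuclideanLin_iff, LinearMap.isPositive_iff_complex]
  intro x
  obtain ⟨r, hr, hrx⟩ := RCLike.nonneg_iff_exists_ofReal.1 (h x.ofLp)
  have hinner : x.ofLp ⬝ᵥ star ((toEuclideanLin M) x).ofLp
      = star (star x.ofLp ⬝ᵥ (M *ᵥ x.ofLp)) := by
    rw [dotProduct_star, dotProduct_comm]; simp
  rw [EuclideanSpace.inner_eq_star_dotProduct, hinner, ← hrx]
  simp [hr]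

theorem monotoneOn_star_dotProduct_mulVec_of_lyapunov {n : Type*} [Fintype n]
    {A S Z : ℝ → Matrix n n ℂ} {v : ℝ → n → ℂ} {D : Set ℝ} (hD : Convex ℝ D)
    (hS : ∀ t ∈ D, (-S t).PosSemidef)
    (hZ : ∀ t ∈ D, ∀ i j, HasDerivWithinAt (fun s ↦ Z s i j)
      ((-((A t)ᴴ * Z t + Z t * A t + S t)) i j) D t)
    (hv : IsIntegralCurveOn v (fun t ↦ (A t).mulVec) D) :
    MonotoneOn (fun t ↦ star (v t) ⬝ᵥ (Z t *ᵥ v t)) D := by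
  have hF : ∀ t ∈ D, HasDerivWithinAt (fun s ↦ star (v s) ⬝ᵥ (Z s *ᵥ v s))
      (star (v t) ⬝ᵥ (-S t *ᵥ v t)) D t := fun t ht ↦ by
    simpa only [lyapunov_quadratic_identity] using (hv t ht).star_dotProduct_mulVec (hZ t ht)
  exact Complex.monotoneOn_of_hasDerivWithinAt_nonneg hD (fun t ht ↦ (hF t ht).continuousWithinAt)
    (fun t ht ↦ (hF t (interior_subset ht)).mono interior_subset)
    fun t ht ↦ (hS t (interior_subset ht)).dotProduct_mulVec_nonneg _

theorem lyapunov_posSemidef_general (n : ℕ) (t₀ : ℝ)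
    (A S Z : ℝ → Matrix (Fin n) (Fin n) ℂ)
    (Z₀ : Matrix (Fin n) (Fin n) ℂ)
    (hA : ContinuousOn A (Set.Ici t₀))
    (hSneg : ∀ t, t₀ ≤ t → (-(S t)).PosSemidef)
    (hZ₀ : Z₀.PosSemidef) (hZt₀ : Z t₀ = Z₀)
    (hZ : ∀ t ∈ Set.Ici t₀, ∀ i j,
      HasDerivAt (fun s => Z s i j)
        ((-((A t)ᴴ * Z t + Z t * A t + S t)) i j) t) :
    ∀ t ∈ Set.Ici t₀, (Z t).PosSemidef := by
  intro T hT
  let B : ℝ → (Fin n → ℂ) →L[ℝ] (Fin n → ℂ) := fun t ↦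
    ((A t).mulVecLin.restrictScalars ℝ).toContinuousLinearMap
  have hB : ContinuousOn B (Icc t₀ T) := continuousOn_clm_apply.2 fun y ↦
    ((continuous_id.matrix_mulVec continuous_const).comp_continuousOn hA).mono Icc_subset_Ici_self
  refine posSemidef_iff_forall_star_dotProduct_mulVec_nonneg.2 fun x ↦ ?_
  obtain ⟨v, hvT, hv⟩ := exists_isIntegralCurveOn_clm hB (right_mem_Icc.2 hT) x
  have hmono := monotoneOn_star_dotProduct_mulVec_of_lyapunov (convex_Icc t₀ T)
    (fun t ht ↦ hSneg t ht.1) (fun t ht i j ↦ (hZ t ht.1 i j).hasDerivWithinAt) hv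
  calc 0 ≤ star (v t₀) ⬝ᵥ (Z t₀ *ᵥ v t₀) := hZt₀ ▸ hZ₀.dotProduct_mulVec_nonneg _
    _ ≤ star (v T) ⬝ᵥ (Z T *ᵥ v T) := hmono (left_mem_Icc.2 hT) (right_mem_Icc.2 hT) hT
    _ = star x ⬝ᵥ (Z T *ᵥ x) := by rw [hvT]

/-- Solutions of the Lyapunov equation `Z' + A* Z + Z A + S = 0` with `S ≤ 0` and
`Z(t₀) ≥ 0` stay Hermitian positive semidefinite. -/
theorem lyapunov_posSemidef (n : ℕ) (t₀ : ℝ)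
    (A S Z : ℝ → Matrix (Fin n) (Fin n) ℂ)
    (Z₀ : Matrix (Fin n) (Fin n) ℂ)
    (hA : ContinuousOn A (Set.Ici t₀)) (hS : ContinuousOn S (Set.Ici t₀))
    (hSneg : ∀ t, t₀ ≤ t → (-(S t)).PosSemidef)
    (hZ₀ : Z₀.PosSemidef) (hZt₀ : Z t₀ = Z₀)
    (hZ : ∀ t ∈ Set.Ici t₀, ∀ i j,
      HasDerivAt (fun s => Z s i j)
        ((-((A t)ᴴ * Z t + Z t * A t + S t)) i j) t) :
    ∀ t ∈ Set.Ici t₀, (Z t).PosSemidef :=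
  lyapunov_posSemidef_general n t₀ A S Z Z₀ hA hSneg hZ₀ hZt₀ hZ
end
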